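/- Let σ > 3 and let k, l be integers with 1 ≤ k < l ≤ 2k. Then there is a constant C₀ (depending only on σ) such that ∫₀^t ⟨k−l, kt−ls⟩^{−σ} ⟨s⟩^{−σ+1} |l| ds ≤ C₀ ⟨k−l⟩^{−2} ⟨t⟩^{−σ+1} for all t ≥ 0, where ⟨k−l, kt−ls⟩ = sqrt(1+(k−l)²+(kt−ls)²), ⟨s⟩ = sqrt(1+s²). -/
import Mathlib

open MeasureTheory

/-- Japanese bracket ⟨k, η⟩ = sqrt(1 + k² + η²). -/
noncomputable def jbk (k η : ℝ) : ℝ := Real.sqrt (1 + k ^ 2 + η ^ 2)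

/-- Japanese bracket of a real number. -/
noncomputable def jb (s : ℝ) : ℝ := Real.sqrt (1 + s ^ 2)

lemma jb_pos (s : ℝ) : 0 < jb s := Real.sqrt_pos.2 (by positivity)

lemma one_le_jb (s : ℝ) : 1 ≤ jb s := by
  rw [jb]
  nth_rewrite 1 [show (1:ℝ) = Real.sqrt 1 from Real.sqrt_one.symm]
  exact Real.sqrt_le_sqrt (by nlinarith [sq_nonneg s])

lemma self_le_jb (s : ℝ) : s ≤ jb s := by
  rcases le_or_gt s 0 with h | h
  · exact h.trans (jb_pos s).le
  · have : s = Real.sqrt (s ^ 2) := by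
      rw [Real.sqrt_sq h.le]
    rw [this, jb]
    exact Real.sqrt_le_sqrt (by nlinarith)

lemma jb_mono {x y : ℝ} (hx : 0 ≤ x) (h : x ≤ y) : jb x ≤ jb y :=
  Real.sqrt_le_sqrt (by nlinarith)

lemma jbk_pos (a x : ℝ) : 0 < jbk a x := Real.sqrt_pos.2 (by positivity)

lemma jb_le_jbk (a x : ℝ) : jb a ≤ jbk a x :=
  Real.sqrt_le_sqrt (by nlinarith [sq_nonneg x])

lemma jb_le_jbk' (a x : ℝ) : jb x ≤ jbk a x :=
  Real.sqrt_le_sqrt (by nlinarith [sq_nonneg a])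

lemma jbk_rpow_le {σ : ℝ} (hσ : 3 < σ) (a x : ℝ) :
    jbk a x ^ (-σ) ≤ jb a ^ (-(2:ℝ)) * jb x ^ (-σ + 2) := by
  have h1 : 0 < jbk a x := jbk_pos a x
  have hsplit : jbk a x ^ (-σ) = jbk a x ^ (-(2:ℝ)) * jbk a x ^ (-σ + 2) := by
    rw [← Real.rpow_add h1]; ring_nf
  rw [hsplit]
  exact mul_le_mul
    (Real.rpow_le_rpow_of_nonpos (jb_pos a) (jb_le_jbk a x) (by norm_num))
    (Real.rpow_le_rpow_of_nonpos (jb_pos x) (jb_le_jbk' a x) (by linarith))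
    (Real.rpow_nonneg h1.le _) (Real.rpow_nonneg (jb_pos a).le _)

lemma integrable_jb_rpow {e : ℝ} (he : e < -1) :
    Integrable (fun u : ℝ => jb u ^ e) := by
  have h : ∀ u : ℝ, jb u ^ e = ((1:ℝ) + ‖u‖ ^ 2) ^ (-(-e) / 2) := by
    intro u
    rw [jb, Real.sqrt_eq_rpow, ← Real.rpow_mul (by positivity)]
    rw [Real.norm_eq_abs, sq_abs]
    congr 1
    ring
  simp_rw [h]
  apply integrable_rpow_neg_one_add_norm_sq
  rw [Module.finrank_self]
  push_cast
  linarith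

lemma continuous_jb_rpow (e : ℝ) : Continuous fun s : ℝ => jb s ^ e := by
  apply Continuous.rpow_const
  · exact Real.continuous_sqrt.comp (by fun_prop)
  · exact fun x => Or.inl (ne_of_gt (jb_pos x))

lemma intervalIntegral_jb_le {e : ℝ} (he : e < -1) {c d : ℝ} (hcd : c ≤ d) :
    ∫ s in c..d, jb s ^ e ≤ ∫ s : ℝ, jb s ^ e := by
  rw [intervalIntegral.integral_of_le hcd]
  exact setIntegral_le_integral (integrable_jb_rpow he)
    (Filter.Eventually.of_forall fun s => Real.rpow_nonneg (jb_pos s).le e)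

lemma sub_integral_le {e : ℝ} (he : e < -1) {L : ℝ} (hL : 1 ≤ L) (b c d : ℝ) (hcd : c ≤ d) :
    ∫ s in c..d, jb (b - L * s) ^ e * L ≤ ∫ u : ℝ, jb u ^ e := by
  have hL0 : L ≠ 0 := by linarith
  rw [intervalIntegral.integral_mul_const,
    intervalIntegral.integral_comp_sub_mul (fun u => jb u ^ e) hL0 b, smul_eq_mul]
  have h2 : L⁻¹ * (∫ u in b - L*d..b - L*c, jb u ^ e) * L
      = ∫ u in b - L*d..b - L*c, jb u ^ e := by field_simp
  rw [h2]
  exact intervalIntegral_jb_le he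
    (by nlinarith [mul_le_mul_of_nonneg_left hcd (by linarith : (0:ℝ) ≤ L)])

lemma sqrt_four : Real.sqrt 4 = 2 := by
  rw [show (4:ℝ) = 2^2 by norm_num, Real.sqrt_sq (by norm_num : (0:ℝ) ≤ 2)]

lemma jb_le_four_jb_quarter (t : ℝ) : jb t ≤ 4 * jb (t/4) := by
  have h : (4:ℝ) * jb (t/4) = Real.sqrt (16 * (1 + (t/4)^2)) := by
    rw [Real.sqrt_mul (by norm_num : (0:ℝ) ≤ 16), jb,
      show Real.sqrt 16 = 4 by
        rw [show (16:ℝ) = 4^2 by norm_num, Real.sqrt_sq (by norm_num : (0:ℝ) ≤ 4)]]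
  rw [h, jb]
  exact Real.sqrt_le_sqrt (by nlinarith [sq_nonneg t])

lemma jb_quarter_rpow {t e : ℝ} (he : e ≤ 0) :
    jb (t/4) ^ e ≤ (4:ℝ) ^ (-e) * jb t ^ e := by
  have h1 : (4 * jb (t/4)) ^ e ≤ jb t ^ e :=
    Real.rpow_le_rpow_of_nonpos (jb_pos t) (jb_le_four_jb_quarter t) he
  have h2 : (4 * jb (t/4)) ^ e = (4:ℝ)^e * jb (t/4) ^ e :=
    Real.mul_rpow (by norm_num) (jb_pos _).le
  have h3 : (4:ℝ)^(-e) * ((4:ℝ)^e * jb (t/4) ^ e) = jb (t/4) ^ e := by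
    rw [← mul_assoc, ← Real.rpow_add (by norm_num : (0:ℝ) < 4)]
    norm_num
  calc jb (t/4) ^ e = (4:ℝ)^(-e) * ((4:ℝ)^e * jb (t/4) ^ e) := h3.symm
    _ ≤ (4:ℝ)^(-e) * jb t ^ e := by
        rw [← h2]
        exact mul_le_mul_of_nonneg_left h1 (Real.rpow_nonneg (by norm_num) _)

lemma jb_le_two_mul {t : ℝ} (ht : 1 ≤ t) : jb t ≤ 2 * t := by
  rw [jb, show 2*t = Real.sqrt ((2*t)^2) from (Real.sqrt_sq (by linarith)).symm]
  exact Real.sqrt_le_sqrt (by nlinarith)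

set_option maxHeartbeats 1200000 in
theorem echo_time_integral_bound (σ : ℝ) (hσ : 3 < σ) :
    ∃ C₀ > 0, ∀ (k l : ℤ), 1 ≤ k → k < l → l ≤ 2 * k → ∀ t : ℝ, 0 ≤ t →
      (∫ s in (0 : ℝ)..t,
          jbk ((k : ℝ) - l) ((k : ℝ) * t - (l : ℝ) * s) ^ (-σ) * jb s ^ (-σ + 1) * |(l : ℝ)|) ≤
        C₀ * jb ((k : ℝ) - l) ^ (-(2 : ℝ)) * jb t ^ (-σ + 1) := by
  have he2 : -σ + 2 < -1 := by linarith
  have he1 : -σ + 1 < -1 := by linarith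
  set I1 : ℝ := ∫ s : ℝ, jb s ^ (-σ + 1) with hI1def
  set I2 : ℝ := ∫ u : ℝ, jb u ^ (-σ + 2) with hI2def
  have hI1n : 0 ≤ I1 := integral_nonneg fun s => Real.rpow_nonneg (jb_pos s).le _
  have hI2n : 0 ≤ I2 := integral_nonneg fun s => Real.rpow_nonneg (jb_pos s).le _
  have hP : (0:ℝ) < (8:ℝ) ^ σ := Real.rpow_pos_of_pos (by norm_num) σ
  set C₀ : ℝ := 2 * (8:ℝ) ^ σ * (I1 + I2) + 1 with hC₀def
  have hC₀ : 0 < C₀ := by nlinarith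
  refine ⟨C₀, hC₀, ?_⟩
  intro k l hk hkl hkl2 t ht
  -- basic facts about k, l
  have hK : (1:ℝ) ≤ (k:ℝ) := by exact_mod_cast hk
  have hKL : (k:ℝ) + 1 ≤ (l:ℝ) := by exact_mod_cast Int.add_one_le_of_lt hkl
  have hL2K : (l:ℝ) ≤ 2 * (k:ℝ) := by exact_mod_cast hkl2
  set K : ℝ := (k:ℝ)
  set L : ℝ := (l:ℝ)
  have hL2 : (2:ℝ) ≤ L := by linarith
  have hL0 : (0:ℝ) < L := by linarith
  have hL1 : (1:ℝ) ≤ L := by linarith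
  have habs : |L| = L := abs_of_pos hL0
  set A : ℝ := jb (K - L) with hAdef
  have hA0 : 0 < A := jb_pos _
  have hA1 : 1 ≤ A := one_le_jb _
  have hA2pos : (0:ℝ) < A ^ (-(2:ℝ)) := Real.rpow_pos_of_pos hA0 _
  -- L ^ (-2) ≤ 2 * A ^ (-2)
  have hLA : L ^ (-(2:ℝ)) ≤ 2 * A ^ (-(2:ℝ)) := by
    have hAL : A^2 ≤ 2 * L^2 := by
      have : (K - L)^2 ≤ (L - 1)^2 := by nlinarith
      have hA2 : A^2 = 1 + (K - L)^2 := by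
        rw [hAdef, jb, Real.sq_sqrt (by positivity)]
      nlinarith
    have h1 : A ^ (-(2:ℝ)) = (A^2)⁻¹ := by
      rw [Real.rpow_neg hA0.le, show ((2:ℝ)) = ((2:ℕ):ℝ) by norm_num,
        Real.rpow_natCast]
    have h2 : L ^ (-(2:ℝ)) = (L^2)⁻¹ := by
      rw [Real.rpow_neg hL0.le, show ((2:ℝ)) = ((2:ℕ):ℝ) by norm_num,
        Real.rpow_natCast]
    rw [h1, h2, inv_eq_one_div, inv_eq_one_div,
      show 2*(1/A^2) = 2/A^2 by ring, div_le_div_iff₀ (by positivity) (by positivity)]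
    nlinarith
  clear_value A K L
  -- continuity of the integrand
  have hFc : Continuous fun s : ℝ =>
      jbk (K - L) (K * t - L * s) ^ (-σ) * jb s ^ (-σ + 1) * |L| := by
    apply Continuous.mul _ continuous_const
    apply Continuous.mul _ (continuous_jb_rpow _)
    apply Continuous.rpow_const
    · unfold jbk
      exact Real.continuous_sqrt.comp (by fun_prop)
    · exact fun x => Or.inl (ne_of_gt (jbk_pos _ _))
  have hGc : Continuous fun s : ℝ => jb (K*t - L*s) ^ (-σ+2) * L :=
    ((continuous_jb_rpow (-σ+2)).comp (by fun_prop)).mul continuous_const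
  have hB : 0 ≤ A ^ (-(2:ℝ)) * jb t ^ (-σ+1) :=
    mul_nonneg hA2pos.le (Real.rpow_nonneg (jb_pos t).le _)
  rcases le_or_gt t 1 with ht1 | ht1
  · -- case t ≤ 1
    have hjbt : jb t ≤ 2 := by
      rw [jb, ← sqrt_four]
      exact Real.sqrt_le_sqrt (by nlinarith)
    have hjbt1 : (8:ℝ)^(-σ) ≤ jb t ^ (-σ + 1) := by
      have h1 : (2:ℝ) ^ (-σ+1) ≤ jb t ^ (-σ+1) :=
        Real.rpow_le_rpow_of_nonpos (jb_pos t) hjbt (by linarith)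
      have h2 : (8:ℝ)^(-σ) = (2:ℝ)^(((3:ℕ):ℝ) * -σ) := by
        rw [Real.rpow_mul (by norm_num : (0:ℝ) ≤ 2), Real.rpow_natCast]
        norm_num
      have h3 : (2:ℝ)^(((3:ℕ):ℝ) * -σ) ≤ (2:ℝ)^(-σ+1) :=
        Real.rpow_le_rpow_of_exponent_le (by norm_num) (by push_cast; linarith)
      linarith [h2 ▸ h3]
    have hpt : ∀ s ∈ Set.Icc (0:ℝ) t,
        jbk (K - L) (K*t - L*s) ^ (-σ) * jb s ^ (-σ+1) * |L|
          ≤ A ^ (-(2:ℝ)) * (jb (K*t - L*s) ^ (-σ+2) * L) := by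
      intro s _
      rw [habs]
      have h1 := jbk_rpow_le hσ (K - L) (K*t - L*s)
      rw [← hAdef] at h1
      have h2 : jb s ^ (-σ+1) ≤ 1 :=
        Real.rpow_le_one_of_one_le_of_nonpos (one_le_jb s) (by linarith)
      calc jbk (K - L) (K*t - L*s) ^ (-σ) * jb s ^ (-σ+1) * L
          ≤ (A ^ (-(2:ℝ)) * jb (K*t - L*s) ^ (-σ+2)) * 1 * L := by
            apply mul_le_mul_of_nonneg_right _ hL0.le
            exact mul_le_mul h1 h2 (Real.rpow_nonneg (jb_pos s).le _)
              (mul_nonneg hA2pos.le (Real.rpow_nonneg (jb_pos _).le _))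
        _ = A ^ (-(2:ℝ)) * (jb (K*t - L*s) ^ (-σ+2) * L) := by ring
    calc (∫ s in (0:ℝ)..t, jbk (K - L) (K*t - L*s) ^ (-σ) * jb s ^ (-σ+1) * |L|)
        ≤ ∫ s in (0:ℝ)..t, A ^ (-(2:ℝ)) * (jb (K*t - L*s) ^ (-σ+2) * L) :=
          intervalIntegral.integral_mono_on ht (hFc.intervalIntegrable _ _)
            ((continuous_const.mul hGc).intervalIntegrable _ _) hpt
      _ = A ^ (-(2:ℝ)) * ∫ s in (0:ℝ)..t, jb (K*t - L*s) ^ (-σ+2) * L := by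
          rw [intervalIntegral.integral_const_mul]
      _ ≤ A ^ (-(2:ℝ)) * I2 :=
          mul_le_mul_of_nonneg_left (sub_integral_le he2 hL1 (K*t) 0 t ht) hA2pos.le
      _ ≤ C₀ * A ^ (-(2:ℝ)) * jb t ^ (-σ+1) := by
          have h7 : (8:ℝ)^(-σ) = ((8:ℝ)^σ)⁻¹ := Real.rpow_neg (by norm_num) σ
          have h6 : C₀ * (8:ℝ)^(-σ) = 2*(I1+I2) + ((8:ℝ)^σ)⁻¹ := by
            rw [h7, hC₀def]
            field_simp
          have h5 : I2 ≤ C₀ * jb t ^ (-σ+1) := by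
            have h8 : C₀ * (8:ℝ)^(-σ) ≤ C₀ * jb t ^ (-σ+1) :=
              mul_le_mul_of_nonneg_left hjbt1 hC₀.le
            have h9 : 0 < ((8:ℝ)^σ)⁻¹ := by positivity
            nlinarith
          calc A ^ (-(2:ℝ)) * I2 ≤ A^(-(2:ℝ)) * (C₀ * jb t ^ (-σ+1)) :=
              mul_le_mul_of_nonneg_left h5 hA2pos.le
            _ = C₀ * A^(-(2:ℝ)) * jb t^(-σ+1) := by ring
  · -- case 1 < t
    have ht4 : (0:ℝ) ≤ t/4 := by linarith
    have ht44 : t/4 ≤ t := by linarith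
    -- Part 1 pointwise bound on [0, t/4]
    have hpt1 : ∀ s ∈ Set.Icc (0:ℝ) (t/4),
        jbk (K - L) (K*t - L*s) ^ (-σ) * jb s ^ (-σ+1) * |L|
          ≤ (2 * (8:ℝ)^σ * (A^(-(2:ℝ)) * jb t^(-σ+1))) * jb s^(-σ+1) := by
      intro s hs
      rw [habs]
      have hjt2 : jb t ≤ 2*t := jb_le_two_mul ht1.le
      have hu : L * jb t / 8 ≤ K*t - L*s := by
        have h2 : L*s ≤ L*(t/4) := mul_le_mul_of_nonneg_left hs.2 hL0.le
        nlinarith [mul_le_mul_of_nonneg_right hL2K ht,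
          mul_le_mul_of_nonneg_left hjt2 hL0.le]
      have hub : L * jb t / 8 ≤ jbk (K-L) (K*t-L*s) :=
        le_trans hu (le_trans (self_le_jb _) (jb_le_jbk' _ _))
      have hXpos : 0 < L * jb t / 8 :=
        div_pos (mul_pos hL0 (jb_pos t)) (by norm_num)
      have h1 : jbk (K-L) (K*t-L*s) ^ (-σ) ≤ (L * jb t / 8) ^ (-σ) :=
        Real.rpow_le_rpow_of_nonpos hXpos hub (by linarith)
      have h2 : (L * jb t / 8) ^ (-σ) = (8:ℝ)^σ * (L^(-σ) * jb t^(-σ)) := by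
        rw [Real.div_rpow (mul_pos hL0 (jb_pos t)).le (by norm_num),
          Real.mul_rpow hL0.le (jb_pos t).le,
          Real.rpow_neg (by norm_num : (0:ℝ) ≤ 8), div_inv_eq_mul]
        ring
      have hLL : L^(-σ) * L ≤ 2 * A^(-(2:ℝ)) := by
        have e1 : L^(-σ) * L = L^(-σ+1) := by
          rw [Real.rpow_add_one hL0.ne' (-σ)]
        have e2 : L^(-σ+1) ≤ L^(-(2:ℝ)) :=
          Real.rpow_le_rpow_of_exponent_le hL1 (by linarith)
        rw [e1]
        exact e2.trans hLA
      have hT : jb t^(-σ) ≤ jb t^(-σ+1) :=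
        Real.rpow_le_rpow_of_exponent_le (one_le_jb t) (by linarith)
      calc jbk (K - L) (K*t - L*s) ^ (-σ) * jb s ^ (-σ+1) * L
          ≤ ((8:ℝ)^σ * (L^(-σ) * jb t^(-σ))) * jb s ^ (-σ+1) * L := by
            apply mul_le_mul_of_nonneg_right _ hL0.le
            exact mul_le_mul_of_nonneg_right (h2 ▸ h1)
              (Real.rpow_nonneg (jb_pos s).le _)
        _ = (8:ℝ)^σ * jb t^(-σ) * jb s^(-σ+1) * (L^(-σ) * L) := by ring
        _ ≤ (8:ℝ)^σ * jb t^(-σ+1) * jb s^(-σ+1) * (2 * A^(-(2:ℝ))) := by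
            have hnn1 : (0:ℝ) ≤ (8:ℝ)^σ := hP.le
            have hnn2 : (0:ℝ) ≤ jb s^(-σ+1) := Real.rpow_nonneg (jb_pos s).le _
            have hnn3 : (0:ℝ) ≤ L^(-σ) * L :=
              mul_nonneg (Real.rpow_nonneg hL0.le _) hL0.le
            have hnn4 : (0:ℝ) ≤ jb t^(-σ+1) := Real.rpow_nonneg (jb_pos t).le _
            apply mul_le_mul _ hLL hnn3 _
            · exact mul_le_mul_of_nonneg_right
                (mul_le_mul_of_nonneg_left hT hnn1) hnn2
            · exact mul_nonneg (mul_nonneg hnn1 hnn4) hnn2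
        _ = (2 * (8:ℝ)^σ * (A^(-(2:ℝ)) * jb t^(-σ+1))) * jb s^(-σ+1) := by ring
    -- Part 2 pointwise bound on [t/4, t]
    have hpt2 : ∀ s ∈ Set.Icc (t/4) t,
        jbk (K - L) (K*t - L*s) ^ (-σ) * jb s ^ (-σ+1) * |L|
          ≤ ((4:ℝ)^σ * (A^(-(2:ℝ)) * jb t^(-σ+1))) * (jb (K*t - L*s)^(-σ+2) * L) := by
      intro s hs
      rw [habs]
      have h1 := jbk_rpow_le hσ (K-L) (K*t - L*s)
      rw [← hAdef] at h1
      have hs4 : jb (t/4) ≤ jb s := jb_mono ht4 hs.1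
      have h2 : jb s ^ (-σ+1) ≤ jb (t/4) ^ (-σ+1) :=
        Real.rpow_le_rpow_of_nonpos (jb_pos _) hs4 (by linarith)
      have h3 : jb (t/4) ^ (-σ+1) ≤ (4:ℝ)^(-(-σ+1)) * jb t^(-σ+1) :=
        jb_quarter_rpow (by linarith)
      have h4 : (4:ℝ)^(-(-σ+1)) ≤ (4:ℝ)^σ :=
        Real.rpow_le_rpow_of_exponent_le (by norm_num) (by linarith)
      have hnn4 : (0:ℝ) ≤ jb t^(-σ+1) := Real.rpow_nonneg (jb_pos t).le _
      have h5 : jb s ^ (-σ+1) ≤ (4:ℝ)^σ * jb t^(-σ+1) :=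
        h2.trans (h3.trans (mul_le_mul_of_nonneg_right h4 hnn4))
      calc jbk (K - L) (K*t - L*s) ^ (-σ) * jb s ^ (-σ+1) * L
          ≤ ((A^(-(2:ℝ)) * jb (K*t - L*s)^(-σ+2)) * ((4:ℝ)^σ * jb t^(-σ+1))) * L := by
            apply mul_le_mul_of_nonneg_right _ hL0.le
            exact mul_le_mul h1 h5 (Real.rpow_nonneg (jb_pos s).le _)
              (mul_nonneg hA2pos.le (Real.rpow_nonneg (jb_pos _).le _))
        _ = ((4:ℝ)^σ * (A^(-(2:ℝ)) * jb t^(-σ+1))) * (jb (K*t - L*s)^(-σ+2) * L) := by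
            ring
    -- integrate the two parts
    have hc1 : (0:ℝ) ≤ 2 * (8:ℝ)^σ * (A^(-(2:ℝ)) * jb t^(-σ+1)) :=
      mul_nonneg (by positivity) hB
    have hc2 : (0:ℝ) ≤ (4:ℝ)^σ * (A^(-(2:ℝ)) * jb t^(-σ+1)) :=
      mul_nonneg (by positivity) hB
    have hint1 : (∫ s in (0:ℝ)..(t/4),
          jbk (K - L) (K*t - L*s) ^ (-σ) * jb s ^ (-σ+1) * |L|)
        ≤ (2 * (8:ℝ)^σ * (A^(-(2:ℝ)) * jb t^(-σ+1))) * I1 := by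
      calc (∫ s in (0:ℝ)..(t/4),
            jbk (K - L) (K*t - L*s) ^ (-σ) * jb s ^ (-σ+1) * |L|)
          ≤ ∫ s in (0:ℝ)..(t/4),
              (2 * (8:ℝ)^σ * (A^(-(2:ℝ)) * jb t^(-σ+1))) * jb s^(-σ+1) :=
            intervalIntegral.integral_mono_on ht4 (hFc.intervalIntegrable _ _)
              ((continuous_const.mul (continuous_jb_rpow _)).intervalIntegrable _ _) hpt1
        _ = (2 * (8:ℝ)^σ * (A^(-(2:ℝ)) * jb t^(-σ+1))) * ∫ s in (0:ℝ)..(t/4), jb s^(-σ+1) := by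
            rw [intervalIntegral.integral_const_mul]
        _ ≤ (2 * (8:ℝ)^σ * (A^(-(2:ℝ)) * jb t^(-σ+1))) * I1 :=
            mul_le_mul_of_nonneg_left (intervalIntegral_jb_le he1 ht4) hc1
    have hint2 : (∫ s in (t/4)..t,
          jbk (K - L) (K*t - L*s) ^ (-σ) * jb s ^ (-σ+1) * |L|)
        ≤ ((4:ℝ)^σ * (A^(-(2:ℝ)) * jb t^(-σ+1))) * I2 := by
      calc (∫ s in (t/4)..t,
            jbk (K - L) (K*t - L*s) ^ (-σ) * jb s ^ (-σ+1) * |L|)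
          ≤ ∫ s in (t/4)..t,
              ((4:ℝ)^σ * (A^(-(2:ℝ)) * jb t^(-σ+1))) * (jb (K*t - L*s)^(-σ+2) * L) :=
            intervalIntegral.integral_mono_on (by linarith) (hFc.intervalIntegrable _ _)
              ((continuous_const.mul hGc).intervalIntegrable _ _) hpt2
        _ = ((4:ℝ)^σ * (A^(-(2:ℝ)) * jb t^(-σ+1))) *
              ∫ s in (t/4)..t, jb (K*t - L*s)^(-σ+2) * L := by
            rw [intervalIntegral.integral_const_mul]
        _ ≤ ((4:ℝ)^σ * (A^(-(2:ℝ)) * jb t^(-σ+1))) * I2 :=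
            mul_le_mul_of_nonneg_left
              (sub_integral_le he2 hL1 (K*t) (t/4) t (by linarith)) hc2
    have hsplit : (∫ s in (0:ℝ)..t,
          jbk (K - L) (K*t - L*s) ^ (-σ) * jb s ^ (-σ+1) * |L|)
        = (∫ s in (0:ℝ)..(t/4),
            jbk (K - L) (K*t - L*s) ^ (-σ) * jb s ^ (-σ+1) * |L|)
          + ∫ s in (t/4)..t,
              jbk (K - L) (K*t - L*s) ^ (-σ) * jb s ^ (-σ+1) * |L| :=
      (intervalIntegral.integral_add_adjacent_intervals
        (hFc.intervalIntegrable _ _) (hFc.intervalIntegrable _ _)).symm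
    rw [hsplit]
    have h44 : (4:ℝ)^σ ≤ (8:ℝ)^σ :=
      Real.rpow_le_rpow (by norm_num) (by norm_num) (by linarith)
    have hfinal : (2 * (8:ℝ)^σ * (A^(-(2:ℝ)) * jb t^(-σ+1))) * I1
        + ((4:ℝ)^σ * (A^(-(2:ℝ)) * jb t^(-σ+1))) * I2
        ≤ C₀ * A^(-(2:ℝ)) * jb t^(-σ+1) := by
      rw [hC₀def]
      nlinarith [mul_nonneg (mul_nonneg (show (0:ℝ) ≤ 2*(8:ℝ)^σ - (4:ℝ)^σ by nlinarith) hI2n) hB,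
        hB, mul_nonneg hI2n hB, mul_nonneg hI1n hB]
    exact le_trans (add_le_add hint1 hint2) hfinal
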